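/- Suppose Σ is state monotone, X is lower closed, and x₀ is open-loop feasible with input trajectory u : ℕ → U and horizon N, i.e. Φ(k, x₀, u, D) ⊆ X for 1 ≤ k ≤ N−1 and Φ(N, x₀, u, D) ⊆ ↓⋃_{0≤k≤N−1} Φ(k, x₀, u, D). Then K = ↓⋃_{0≤k≤N−1} Φ(k, x₀, u, D) is a robust controlled invariant for Σ and (X, U, D). -/
import Mathlib


/-- K is a robust controlled invariant for x⁺ = f(x,u,d) and constraint set (X, U, D). -/
def IsRCI {Xt Ut Dt : Type*} (f : Xt → Ut → Dt → Xt)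
    (XS : Set Xt) (US : Set Ut) (DS : Set Dt) (K : Set Xt) : Prop :=
  K ⊆ XS ∧ ∀ x ∈ K, ∃ u ∈ US, ∀ d ∈ DS, f x u d ∈ K

/-- Open-loop trajectory of x⁺ = f(x, u(k), d(k)). -/
def olTraj {Xt Ut Dt : Type*} (f : Xt → Ut → Dt → Xt) (u : ℕ → Ut) (x₀ : Xt)
    (d : ℕ → Dt) : ℕ → Xt
  | 0 => x₀
  | k + 1 => f (olTraj f u x₀ d k) (u k) (d k)

/-- Open-loop reachable set Φ(k, x₀, u, D) over all disturbance sequences valued in D. -/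
def olReach {Xt Ut Dt : Type*} (f : Xt → Ut → Dt → Xt) (u : ℕ → Ut) (x₀ : Xt)
    (DS : Set Dt) (k : ℕ) : Set Xt :=
  {x | ∃ d : ℕ → Dt, (∀ i, d i ∈ DS) ∧ olTraj f u x₀ d k = x}

lemma olTraj_congr {Xt Ut Dt : Type*} (f : Xt → Ut → Dt → Xt) (u : ℕ → Ut) (x₀ : Xt)
    (d₁ d₂ : ℕ → Dt) (k : ℕ) (h : ∀ i < k, d₁ i = d₂ i) :
    olTraj f u x₀ d₁ k = olTraj f u x₀ d₂ k := by
  induction k with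
  | zero => rfl
  | succ n ih =>
    simp only [olTraj]
    rw [ih (fun i hi => h i (Nat.lt_succ_of_lt hi)), h n (Nat.lt_succ_self n)]

/-- for an SM system with lower-closed X, if x₀ ∈ X is open-loop feasible with
    input trajectory u and horizon N, then ↓⋃_{0≤k≤N−1} Φ(k, x₀, u, D) is a robust controlled
    invariant for Σ and (X, U, D). -/
theorem olFeasible_gives_rci {Xt Ut Dt : Type*} [PartialOrder Xt]
    (f : Xt → Ut → Dt → Xt) (XS : Set Xt) (US : Set Ut) (DS : Set Dt)
    (hSM : ∀ x₁ x₂ : Xt, ∀ u : Ut, ∀ d : Dt, x₁ ≤ x₂ → f x₁ u d ≤ f x₂ u d)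
    (hX : ∀ z x : Xt, z ≤ x → x ∈ XS → z ∈ XS)
    (x₀ : Xt) (hx₀ : x₀ ∈ XS)
    (u : ℕ → Ut) (hu : ∀ k, u k ∈ US) (N : ℕ) (hN : 0 < N)
    (hsafe : ∀ k, 1 ≤ k → k < N → olReach f u x₀ DS k ⊆ XS)
    (hfeas : olReach f u x₀ DS N ⊆
      {z | ∃ k < N, ∃ y ∈ olReach f u x₀ DS k, z ≤ y}) :
    IsRCI f XS US DS {z | ∃ k < N, ∃ y ∈ olReach f u x₀ DS k, z ≤ y} := by

  constructor
  · rintro z ⟨k, hk, y, ⟨d, hd, hy⟩, hzy⟩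
    rcases Nat.eq_zero_or_pos k with rfl | hk1
    · exact hX z y hzy (hy ▸ hx₀)
    · exact hX z y hzy (hsafe k hk1 hk ⟨d, hd, hy⟩)
  · rintro x ⟨k, hk, y, ⟨d₀, hd₀, hy⟩, hxy⟩
    refine ⟨u k, hu k, fun d hd => ?_⟩
    -- f y (u k) d ∈ olReach (k+1)
    have hmem : f y (u k) d ∈ olReach f u x₀ DS (k + 1) := by
      refine ⟨fun i => if i < k then d₀ i else d, fun i => ?_, ?_⟩
      · by_cases h : i < k <;> simp [h, hd₀ i, hd]
      · simp only [olTraj]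
        rw [olTraj_congr f u x₀ _ d₀ k (fun i hi => by simp [hi]), hy]
        simp
    have hle : f x (u k) d ≤ f y (u k) d := hSM x y (u k) d hxy
    rcases Nat.lt_or_ge (k + 1) N with h | h
    · exact ⟨k + 1, h, f y (u k) d, hmem, hle⟩
    · have hkN : k + 1 = N := le_antisymm (Nat.succ_le_of_lt hk) h
      obtain ⟨j, hj, y', hy', hle'⟩ := hfeas (hkN ▸ hmem)
      exact ⟨j, hj, y', hy', le_trans hle hle'⟩
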